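/- Let Γ be a strongly regular graph with parameters (n,k,λ,μ) and let (x,y) be a 3-isoregular edge of Γ with associated parameters Q, R, W. Then λμ(k-2λ+Q) = W(k-μ)(k-λ-1). -/

import Mathlib

open Finset

variable {V : Type*}

/-- The number of common neighbors of the three vertices `x, y, z` in `G`. -/
def commonValency [Fintype V] [DecidableEq V] (G : SimpleGraph V)
    [DecidableRel G.Adj] (x y z : V) : ℕ :=
  (G.neighborFinset x ∩ G.neighborFinset y ∩ G.neighborFinset z).card

/-- `(x,y)` is a 3-isoregular edge of `G` with associated parameters `Q, R, W`:
the number of common neighbors of `{x,y,z}` equals `Q`, `R` or `W` according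
to whether the induced subgraph on `{x,y,z}` is `K₃`, `K_{1,2}` or `K₂ + K₁`. -/
def IsoregEdgeWith [Fintype V] [DecidableEq V] (G : SimpleGraph V)
    [DecidableRel G.Adj] (x y : V) (Q R W : ℕ) : Prop :=
  G.Adj x y ∧
  (∀ z, z ≠ x → z ≠ y → G.Adj z x → G.Adj z y → commonValency G x y z = Q) ∧
  (∀ z, z ≠ x → z ≠ y → Xor' (G.Adj z x) (G.Adj z y) → commonValency G x y z = R) ∧
  (∀ z, z ≠ x → z ≠ y → ¬ G.Adj z x → ¬ G.Adj z y → commonValency G x y z = W)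

/-- `(x,z)` is a 3-isoregular non-edge of `G` with associated parameters
`R', W', V'`: the number of common neighbors of `{x,z,u}` equals `R'`, `W'`
or `V'` according to whether the induced subgraph on `{x,z,u}` is `K_{1,2}`,
`K₂ + K₁` or `3K₁`. -/
def IsoregNonEdgeWith [Fintype V] [DecidableEq V] (G : SimpleGraph V)
    [DecidableRel G.Adj] (x z : V) (R' W' V' : ℕ) : Prop :=
  x ≠ z ∧ ¬ G.Adj x z ∧
  (∀ u, u ≠ x → u ≠ z → G.Adj u x → G.Adj u z → commonValency G x z u = R') ∧
  (∀ u, u ≠ x → u ≠ z → Xor' (G.Adj u x) (G.Adj u z) → commonValency G x z u = W') ∧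
  (∀ u, u ≠ x → u ≠ z → ¬ G.Adj u x → ¬ G.Adj u z → commonValency G x z u = V')

namespace SimpleGraph

variable [Fintype V] [DecidableEq V] {G : SimpleGraph V} [DecidableRel G.Adj]
  {n k ℓ μ : ℕ} {x y z w : V}

/-- For an edge `(x, y)` this is the set `D²₂` of the paper. -/
def commonNonNeighborFinset (G : SimpleGraph V) [DecidableRel G.Adj] (x y : V) : Finset V :=
  (G.neighborFinset x ∪ G.neighborFinset y)ᶜ

@[simp]
lemma mem_commonNonNeighborFinset :
    z ∈ G.commonNonNeighborFinset x y ↔ ¬G.Adj x z ∧ ¬G.Adj y z := by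
  simp [commonNonNeighborFinset]

lemma card_filter_adj_neighborFinset_inter (z : V) :
    #{w ∈ G.neighborFinset x ∩ G.neighborFinset y | G.Adj z w} = commonValency G x y z := by
  unfold commonValency
  congr 1
  ext w
  simp [and_assoc]

namespace IsSRGWith

lemma card_neighborFinset_inter_of_adj (h : G.IsSRGWith n k ℓ μ) (hxy : G.Adj x y) :
    #(G.neighborFinset x ∩ G.neighborFinset y) = ℓ := by
  rw [← h.of_adj x y hxy, ← Set.toFinset_card]
  congr 1
  ext w
  simp [mem_commonNeighbors]

lemma card_commonNonNeighborFinset_of_adj (h : G.IsSRGWith n k ℓ μ) (hxy : G.Adj x y) :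
    (#(G.commonNonNeighborFinset x y) : ℤ) = n - 2 * k + ℓ := by
  have hunion := card_union_add_card_inter (G.neighborFinset x) (G.neighborFinset y)
  have hcompl := card_add_card_compl (G.neighborFinset x ∪ G.neighborFinset y)
  rw [h.card_neighborFinset_inter_of_adj hxy, card_neighborFinset_eq_degree,
    card_neighborFinset_eq_degree, h.regular x, h.regular y] at hunion
  rw [h.card] at hcompl
  rw [commonNonNeighborFinset]
  omega

/-- `x` has `n - k - 1 = k (k - ℓ - 1) / μ` non-neighbours (`param_eq`); removing the `k - ℓ - 1`
neighbours of `y` among them leaves `(k - μ)(k - ℓ - 1) / μ`. -/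
lemma mu_mul_card_commonNonNeighborFinset (h : G.IsSRGWith n k ℓ μ) (hxy : G.Adj x y) :
    (μ : ℤ) * #(G.commonNonNeighborFinset x y) = (k - μ) * (k - ℓ - 1) := by
  have hℓk : ℓ < k := by
    simpa [h.of_adj x y hxy, h.regular x] using hxy.card_commonNeighbors_lt_degree
  have hkn : k < n := by
    simpa [h.regular x, h.card] using G.degree_lt_card_verts x
  have hparam := h.param_eq G (by omega)
  have hparam' : (k : ℤ) * (k - ℓ - 1) = (n - k - 1) * μ := by
    rw [Nat.sub_sub, Nat.sub_sub] at hparam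
    zify [Nat.succ_le_of_lt hℓk, Nat.succ_le_of_lt hkn] at hparam
    linear_combination hparam
  rw [h.card_commonNonNeighborFinset_of_adj hxy]
  linear_combination -hparam'

/-- A common neighbour `w` of `x` and `y` has `2ℓ - commonValency G x y w` neighbours in
`N(x) ∪ N(y)`, by inclusion–exclusion; all its other neighbours lie in `D²₂`. -/
lemma card_filter_adj_commonNonNeighborFinset (h : G.IsSRGWith n k ℓ μ) (hwx : G.Adj w x)
    (hwy : G.Adj w y) :
    #{z ∈ G.commonNonNeighborFinset x y | G.Adj z w} + 2 * ℓ = k + commonValency G x y w := by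
  have hsplit := card_sdiff_add_card_inter (G.neighborFinset w)
    (G.neighborFinset x ∪ G.neighborFinset y)
  have hincl := card_union_add_card_inter (G.neighborFinset w ∩ G.neighborFinset x)
    (G.neighborFinset w ∩ G.neighborFinset y)
  have hfilter : {z ∈ G.commonNonNeighborFinset x y | G.Adj z w} =
      G.neighborFinset w \ (G.neighborFinset x ∪ G.neighborFinset y) := by
    ext z
    simp only [mem_filter, mem_commonNonNeighborFinset, mem_sdiff, mem_union, mem_neighborFinset]
    rw [G.adj_comm z w]
    tauto
  have hinter : G.neighborFinset w ∩ G.neighborFinset x ∩ (G.neighborFinset w ∩ G.neighborFinset y)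
      = G.neighborFinset x ∩ G.neighborFinset y ∩ G.neighborFinset w := by
    ext z
    simp only [mem_inter]
    tauto
  rw [← inter_union_distrib_left, hinter, h.card_neighborFinset_inter_of_adj hwx,
    h.card_neighborFinset_inter_of_adj hwy] at hincl
  rw [card_neighborFinset_eq_degree, h.regular w] at hsplit
  rw [hfilter, commonValency]
  omega

end IsSRGWith

end SimpleGraph

open SimpleGraph in
/-- Double counting the edges between `N(x) ∩ N(y)` and `D²₂`. -/
lemma IsoregEdgeWith.card_commonNonNeighborFinset_mul [Fintype V] [DecidableEq V]
    {G : SimpleGraph V} [DecidableRel G.Adj] {n k ℓ μ : ℕ} {x y : V} {Q R W : ℕ}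
    (hxy : IsoregEdgeWith G x y Q R W) (h : G.IsSRGWith n k ℓ μ) :
    (#(G.commonNonNeighborFinset x y) : ℤ) * W = ℓ * (k - 2 * ℓ + Q) := by
  obtain ⟨hadj, hQ, -, hW⟩ := hxy
  have hdouble := sum_card_bipartiteAbove_eq_sum_card_bipartiteBelow (r := G.Adj)
    (s := G.commonNonNeighborFinset x y) (t := G.neighborFinset x ∩ G.neighborFinset y)
  have hbelow : ∀ w ∈ G.neighborFinset x ∩ G.neighborFinset y,
      (#((G.commonNonNeighborFinset x y).bipartiteBelow G.Adj w) : ℤ) = k - 2 * ℓ + Q := by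
    intro w hw
    simp only [mem_inter, mem_neighborFinset] at hw
    have hcount := h.card_filter_adj_commonNonNeighborFinset hw.1.symm hw.2.symm
    rw [hQ w hw.1.ne' hw.2.ne' hw.1.symm hw.2.symm] at hcount
    rw [bipartiteBelow]
    omega
  have habove : ∀ z ∈ G.commonNonNeighborFinset x y,
      #((G.neighborFinset x ∩ G.neighborFinset y).bipartiteAbove G.Adj z) = W := by
    intro z hz
    rw [mem_commonNonNeighborFinset] at hz
    have hzx : z ≠ x := by rintro rfl; exact hz.2 hadj.symm
    have hzy : z ≠ y := by rintro rfl; exact hz.1 hadj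
    rw [bipartiteAbove, card_filter_adj_neighborFinset_inter]
    exact hW z hzx hzy (fun h' => hz.1 h'.symm) (fun h' => hz.2 h'.symm)
  rw [sum_congr rfl habove, sum_const, smul_eq_mul] at hdouble
  have hdouble' : (#(G.commonNonNeighborFinset x y) : ℤ) * W =
      ∑ w ∈ G.neighborFinset x ∩ G.neighborFinset y,
        (#((G.commonNonNeighborFinset x y).bipartiteBelow G.Adj w) : ℤ) := by
    exact_mod_cast hdouble
  rw [hdouble', sum_congr rfl hbelow, sum_const, nsmul_eq_mul,
    h.card_neighborFinset_inter_of_adj hadj]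

/-- For a 3-isoregular edge `(x,y)` of an `(n,k,λ,μ)`-strongly
regular graph with associated parameters `Q,R,W`, we have
`λμ(k-2λ+Q) = W(k-μ)(k-λ-1)`. -/
theorem isoreg_edge_eq2 [Fintype V] [DecidableEq V] (G : SimpleGraph V)
    [DecidableRel G.Adj] (n k lam mu : ℕ) (h : G.IsSRGWith n k lam mu)
    (x y : V) (Q R W : ℕ) (hxy : IsoregEdgeWith G x y Q R W) :
    (lam : ℤ) * mu * (k - 2 * lam + Q) = W * (k - mu) * (k - lam - 1) := by
  linear_combination (W : ℤ) * h.mu_mul_card_commonNonNeighborFinset hxy.1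
    - (mu : ℤ) * hxy.card_commonNonNeighborFinset_mul h
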